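/- arXiv:2101.08509 — 4 statements merged into one kernel-verified Lean document; each statement's English description precedes it below -/
import Mathlib

section
/- Let m* ∈ (0,1) be the unique root of m ↦ 2E(m) − K(m). Then 64(4m* − 2)·E(m*)² < 16π². -/
open Real MeasureTheory Set Function intervalIntegral

noncomputable section

/-- The plane `ℝ²`, with the Euclidean norm. -/
abbrev R2 := EuclideanSpace ℝ (Fin 2)

/-- Planar determinant `det(v, w) = v₁w₂ - v₂w₁`. -/
def det2 (v w : R2) : ℝ := v 0 * w 1 - v 1 * w 0

/-- The complete elliptic integral of the first kind `K(m)`. -/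
def Kel (m : ℝ) : ℝ := ∫ θ in (0:ℝ)..(π/2), 1 / Real.sqrt (1 - m * Real.sin θ ^ 2)

/-- The complete elliptic integral of the second kind `E(m)`. -/
def Eel (m : ℝ) : ℝ := ∫ θ in (0:ℝ)..(π/2), Real.sqrt (1 - m * Real.sin θ ^ 2)

/-- The incomplete elliptic integral of the first kind `F(x, m)`. -/
def Fel (x m : ℝ) : ℝ := ∫ θ in (0:ℝ)..x, 1 / Real.sqrt (1 - m * Real.sin θ ^ 2)

/-- The incomplete elliptic integral of the second kind `E(x, m)`. -/
def EelInc (x m : ℝ) : ℝ := ∫ θ in (0:ℝ)..x, Real.sqrt (1 - m * Real.sin θ ^ 2)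

lemma sqrt_aux {x : ℝ} (hx0 : 0 ≤ x) (hx1 : x ≤ 1) :
    Real.sqrt (1 - x) ≤ 1 - x / 2 - x ^ 2 / 8 := by
  have hy : (0:ℝ) ≤ 1 - x / 2 - x ^ 2 / 8 := by nlinarith
  have : (1 - x) ≤ (1 - x / 2 - x ^ 2 / 8) ^ 2 := by nlinarith
  calc Real.sqrt (1 - x) ≤ Real.sqrt ((1 - x / 2 - x ^ 2 / 8) ^ 2) := Real.sqrt_le_sqrt this
    _ = 1 - x / 2 - x ^ 2 / 8 := Real.sqrt_sq hy

lemma sin_pow_four : (∫ θ in (0:ℝ)..(π/2), Real.sin θ ^ 4) = 3 * π / 16 := by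
  have := integral_sin_pow (a := 0) (b := π/2) 2
  simp at this
  rw [this]; norm_num; ring

lemma Eel_le (m : ℝ) (hm0 : 0 ≤ m) (hm1 : m ≤ 1) :
    Eel m ≤ π / 2 - m * π / 8 - 3 * m ^ 2 * π / 128 := by
  have hub : Eel m ≤ ∫ θ in (0:ℝ)..(π/2), (1 - m * Real.sin θ ^ 2 / 2 - m ^ 2 * Real.sin θ ^ 4 / 8) := by
    apply intervalIntegral.integral_mono_on (by positivity)
    · apply Continuous.intervalIntegrable; fun_prop
    · apply Continuous.intervalIntegrable; fun_prop
    · intro θ _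
      have h1 : 0 ≤ m * Real.sin θ ^ 2 := by positivity
      have h2 : m * Real.sin θ ^ 2 ≤ 1 := by
        have := Real.sin_sq_le_one θ
        nlinarith
      have := sqrt_aux h1 h2
      calc Real.sqrt (1 - m * Real.sin θ ^ 2)
          ≤ 1 - m * Real.sin θ ^ 2 / 2 - (m * Real.sin θ ^ 2) ^ 2 / 8 := this
        _ = 1 - m * Real.sin θ ^ 2 / 2 - m ^ 2 * Real.sin θ ^ 4 / 8 := by ring
  have hint : (∫ θ in (0:ℝ)..(π/2), (1 - m * Real.sin θ ^ 2 / 2 - m ^ 2 * Real.sin θ ^ 4 / 8))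
      = π / 2 - m * π / 8 - 3 * m ^ 2 * π / 128 := by
    rw [intervalIntegral.integral_sub, intervalIntegral.integral_sub]
    · rw [intervalIntegral.integral_const]
      have hs2 : (∫ θ in (0:ℝ)..(π/2), m * Real.sin θ ^ 2 / 2)
          = m / 2 * ∫ θ in (0:ℝ)..(π/2), Real.sin θ ^ 2 := by
        rw [← intervalIntegral.integral_const_mul]; congr 1; ext θ; ring
      have hs4 : (∫ θ in (0:ℝ)..(π/2), m ^ 2 * Real.sin θ ^ 4 / 8)
          = m ^ 2 / 8 * ∫ θ in (0:ℝ)..(π/2), Real.sin θ ^ 4 := by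
        rw [← intervalIntegral.integral_const_mul]; congr 1; ext θ; ring
      rw [hs2, hs4, integral_sin_sq, sin_pow_four]
      simp; ring
    · apply Continuous.intervalIntegrable; fun_prop
    · apply Continuous.intervalIntegrable; fun_prop
    · apply Continuous.intervalIntegrable; fun_prop
    · apply Continuous.intervalIntegrable; fun_prop
  linarith [hub, hint.le, hint.ge]

/-- If `m*` is the unique root of `m ↦ 2E(m) - K(m)` in `(0,1)`, then
`c* = 64(4m* - 2)E(m*)² < 16π²`. -/
theorem cstar_lt_16pi_sq (m : ℝ) (hm : m ∈ Set.Ioo (0:ℝ) 1)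
    (hroot : 2 * Eel m - Kel m = 0) :
    64 * (4 * m - 2) * (Eel m) ^ 2 < 16 * π ^ 2 := by
  obtain ⟨hm0, hm1⟩ := hm
  have hpi := Real.pi_pos
  have hE0 : 0 ≤ Eel m := by
    apply intervalIntegral.integral_nonneg (by positivity)
    intro θ _; positivity
  have hub := Eel_le m hm0.le hm1.le
  have h45 : (0:ℝ) < 64 - 16 * m - 3 * m ^ 2 := by nlinarith
  have hB : 0 < π / 2 - m * π / 8 - 3 * m ^ 2 * π / 128 := by nlinarith [mul_pos hpi h45]
  rcases le_or_gt (4 * m - 2) 0 with h | h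
  · nlinarith [sq_nonneg (Eel m), mul_pos hpi hpi]
  · have hE2 : Eel m ^ 2 ≤ (π / 2 - m * π / 8 - 3 * m ^ 2 * π / 128) ^ 2 := by nlinarith
    have hpoly : (4 * m - 2) * (64 - 16 * m - 3 * m ^ 2) ^ 2 < 4096 := by
      nlinarith [sq_nonneg m, sq_nonneg (1 - m), mul_pos hm0 (sub_pos.mpr hm1),
        sq_nonneg (m * (1 - m)), mul_pos (mul_pos hm0 hm0) (sub_pos.mpr hm1)]
    have key : π ^ 2 / 256 * ((4 * m - 2) * (64 - 16 * m - 3 * m ^ 2) ^ 2)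
        < π ^ 2 / 256 * 4096 :=
      mul_lt_mul_of_pos_left hpoly (by positivity)
    have heq : 64 * (4 * m - 2) * (π / 2 - m * π / 8 - 3 * m ^ 2 * π / 128) ^ 2
        = π ^ 2 / 256 * ((4 * m - 2) * (64 - 16 * m - 3 * m ^ 2) ^ 2) := by ring
    have hmono : 64 * (4 * m - 2) * Eel m ^ 2
        ≤ 64 * (4 * m - 2) * (π / 2 - m * π / 8 - 3 * m ^ 2 * π / 128) ^ 2 :=
      mul_le_mul_of_nonneg_left hE2 (by linarith)
    nlinarith [key, heq, hmono]
end
end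

section
/- Let m* ∈ (0,1) be the unique root of m ↦ 2E(m) − K(m), and define γ̃*: [0,2π] → ℝ² by γ̃*(x) = (2E(x,m*) − F(x,m*), −2√(m*) cos x). Then for x₁, x₂ ∈ [0,2π) with x₁ < x₂, one has γ̃*(x₁) = γ̃*(x₂) if and only if x₁ = π/2 and x₂ = 3π/2; moreover the tangent vectors at the self-intersection are linearly independent: det(γ̃*'(π/2), γ̃*'(3π/2)) ≠ 0. In particular the figure-eight elastica has exactly one self-intersection point, of multiplicity two, and it is non-tangential. -/
open Real MeasureTheory Set Function intervalIntegral

noncomputable section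

/-- The reparametrized figure-eight elastica `γ̃*(x) = (2E(x,m*) - F(x,m*), -2√m* cos x)`. -/
def figEight (m : ℝ) (x : ℝ) : R2 := WithLp.toLp 2 ![2 * EelInc x m - Fel x m, -2 * Real.sqrt m * Real.cos x]

namespace FigEightAux

/-- The integrand of the first component of the figure eight. -/
def g (m θ : ℝ) : ℝ :=
  2 * Real.sqrt (1 - m * Real.sin θ ^ 2) - 1 / Real.sqrt (1 - m * Real.sin θ ^ 2)

/-- The first component of the figure eight, as a single integral. -/
def F (m x : ℝ) : ℝ := ∫ θ in (0:ℝ)..x, g m θ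

variable {m : ℝ}

lemma base_pos (hm : m ∈ Set.Ioo (0:ℝ) 1) (θ : ℝ) : 0 < 1 - m * Real.sin θ ^ 2 := by
  nlinarith [Real.sin_sq_le_one θ, hm.1, hm.2, sq_nonneg (Real.sin θ)]

lemma sqrt_pos' (hm : m ∈ Set.Ioo (0:ℝ) 1) (θ : ℝ) :
    0 < Real.sqrt (1 - m * Real.sin θ ^ 2) := Real.sqrt_pos.2 (base_pos hm θ)

lemma cont_sqrt : Continuous fun θ : ℝ => Real.sqrt (1 - m * Real.sin θ ^ 2) :=
  (continuous_const.sub (continuous_const.mul (Real.continuous_sin.pow 2))).sqrt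

lemma cont_inv (hm : m ∈ Set.Ioo (0:ℝ) 1) :
    Continuous fun θ : ℝ => 1 / Real.sqrt (1 - m * Real.sin θ ^ 2) :=
  continuous_const.div cont_sqrt fun θ => (sqrt_pos' hm θ).ne'

lemma cont_g (hm : m ∈ Set.Ioo (0:ℝ) 1) : Continuous (g m) :=
  (continuous_const.mul cont_sqrt).sub (cont_inv hm)

lemma intg (hm : m ∈ Set.Ioo (0:ℝ) 1) (a b : ℝ) : IntervalIntegrable (g m) volume a b :=
  (cont_g hm).intervalIntegrable a b

lemma ff_eq (hm : m ∈ Set.Ioo (0:ℝ) 1) (x : ℝ) :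
    2 * EelInc x m - Fel x m = F m x := by
  rw [EelInc, Fel, F, ← intervalIntegral.integral_const_mul,
    ← intervalIntegral.integral_sub ((cont_sqrt.intervalIntegrable 0 x).const_mul 2)
      ((cont_inv hm).intervalIntegrable 0 x)]
  rfl

lemma g_eq (hm : m ∈ Set.Ioo (0:ℝ) 1) (θ : ℝ) :
    g m θ = (1 - 2 * m * Real.sin θ ^ 2) / Real.sqrt (1 - m * Real.sin θ ^ 2) := by
  have hs := base_pos hm θ
  have h0 := (sqrt_pos' hm θ).ne'
  rw [g, eq_div_iff h0, sub_mul, one_div, inv_mul_cancel₀ h0, mul_assoc,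
    Real.mul_self_sqrt hs.le]
  ring

lemma g_even (θ : ℝ) : g m (-θ) = g m θ := by simp [g]

lemma g_pi_sub (θ : ℝ) : g m (π - θ) = g m θ := by simp [g, Real.sin_pi_sub]

lemma g_add_pi (θ : ℝ) : g m (θ + π) = g m θ := by simp [g, Real.sin_add_pi]

lemma F_neg (x : ℝ) : F m (-x) = - F m x := by
  have h1 : (∫ u in (0:ℝ)..x, g m (-u)) = ∫ u in (-x)..(0:ℝ), g m u := by
    simpa using intervalIntegral.integral_comp_neg (a := (0:ℝ)) (b := x) (g m)
  have h2 : (∫ u in (0:ℝ)..x, g m (-u)) = F m x := by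
    simp only [g_even]; rfl
  rw [F, intervalIntegral.integral_symm, ← h1, h2]

lemma F_add_pi (hm : m ∈ Set.Ioo (0:ℝ) 1) (x : ℝ) : F m (x + π) = F m x + F m π := by
  have h1 : (∫ u in (0:ℝ)..x, g m (u + π)) = ∫ u in (0+π)..(x+π), g m u :=
    intervalIntegral.integral_comp_add_right (g m) π
  have h2 : (∫ u in (0:ℝ)..x, g m (u + π)) = F m x := by
    simp only [g_add_pi]; rfl
  have h3 := intervalIntegral.integral_add_adjacent_intervals
    (intg hm 0 π) (intg hm π (x + π))
  rw [F, ← h3]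
  rw [h2] at h1
  rw [zero_add] at h1
  rw [← h1]
  simp only [F]
  ring

lemma F_pi_sub (hm : m ∈ Set.Ioo (0:ℝ) 1) (x : ℝ) : F m (π - x) = F m π - F m x := by
  have h1 : (∫ u in (0:ℝ)..x, g m (π - u)) = ∫ u in (π-x)..(π-0), g m u :=
    intervalIntegral.integral_comp_sub_left (g m) π
  have h2 : (∫ u in (0:ℝ)..x, g m (π - u)) = F m x := by
    simp only [g_pi_sub]; rfl
  have h3 := intervalIntegral.integral_add_adjacent_intervals
    (intg hm 0 (π - x)) (intg hm (π - x) π)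
  rw [h2, sub_zero] at h1
  rw [F, eq_sub_iff_add_eq, h1]
  simpa [F] using h3

variable (hm : m ∈ Set.Ioo (0:ℝ) 1) (hroot : 2 * Eel m - Kel m = 0)
include hm hroot

lemma F_half : F m (π / 2) = 0 := by
  rw [← ff_eq hm]; exact hroot

lemma F_pi : F m π = 0 := by
  have h := F_pi_sub hm (π / 2)
  rw [show π - π / 2 = π / 2 by ring, F_half hm hroot] at h
  linarith

lemma m_half : 1 / 2 < m := by
  by_contra h
  push_neg at h
  have hpos : 0 < F m (π / 2) := by
    apply intervalIntegral_pos_of_pos_on (intg hm 0 (π/2)) _ (by positivity)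
    intro θ hθ
    rw [g_eq hm]
    apply div_pos _ (sqrt_pos' hm θ)
    have hc : 0 < Real.cos θ :=
      Real.cos_pos_of_mem_Ioo ⟨by linarith [hθ.1, Real.pi_pos], hθ.2⟩
    nlinarith [Real.sin_sq_add_cos_sq θ, sq_nonneg (Real.sin θ)]
  linarith [F_half hm hroot]

lemma F_pos {x : ℝ} (hx : x ∈ Set.Ioo 0 (π / 2)) : 0 < F m x := by
  have hhalf := m_half hm hroot
  set θ₀ := Real.arcsin (Real.sqrt (1 / (2 * m))) with hθ₀
  have hy0 : (0:ℝ) < 1 / (2 * m) := by positivity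
  have hy1 : (1:ℝ) / (2 * m) < 1 := by
    rw [div_lt_one (by linarith)]; linarith
  have hsin : Real.sin θ₀ = Real.sqrt (1 / (2 * m)) :=
    Real.sin_arcsin (by linarith [Real.sqrt_nonneg (1 / (2 * m))]) (Real.sqrt_le_one.2 hy1.le)
  have hsq : Real.sin θ₀ ^ 2 = 1 / (2 * m) := by
    rw [hsin, Real.sq_sqrt hy0.le]
  have hθ₀pos : 0 < θ₀ := Real.arcsin_pos.2 (Real.sqrt_pos.2 hy0)
  have hθ₀lt : θ₀ < π / 2 := Real.arcsin_lt_pi_div_two.2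
    (lt_of_lt_of_le (Real.sqrt_lt_sqrt hy0.le hy1) (by simp))
  have key : ∀ a b : ℝ, 0 ≤ a → a < b → b ≤ π / 2 → Real.sin a ^ 2 < Real.sin b ^ 2 := by
    intro a b ha hab hb
    have h1 : Real.sin a < Real.sin b := Real.strictMonoOn_sin
      ⟨by linarith [Real.pi_pos], by linarith⟩ ⟨by linarith [Real.pi_pos], hb⟩ hab
    have h2 : 0 ≤ Real.sin a := Real.sin_nonneg_of_nonneg_of_le_pi ha
      (by linarith [Real.pi_pos])
    nlinarith
  rcases le_or_gt x θ₀ with hc | hc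
  · apply intervalIntegral_pos_of_pos_on (intg hm 0 x) _ hx.1
    intro θ hθ
    rw [g_eq hm]
    apply div_pos _ (sqrt_pos' hm θ)
    have := key θ θ₀ hθ.1.le (lt_of_lt_of_le hθ.2 hc) hθ₀lt.le
    rw [hsq] at this
    rw [lt_div_iff₀ (by linarith : (0:ℝ) < 2 * m)] at this
    nlinarith
  · have hneg : 0 < ∫ θ in x..(π/2), (- g m θ) := by
      apply intervalIntegral_pos_of_pos_on ((intg hm x (π/2)).neg) _ hx.2
      intro θ hθ
      show 0 < -(g m θ)
      rw [g_eq hm, neg_div']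
      apply div_pos _ (sqrt_pos' hm θ)
      have := key θ₀ θ hθ₀pos.le (lt_of_le_of_lt hc.le hθ.1) hθ.2.le
      rw [hsq, div_lt_iff₀ (by linarith : (0:ℝ) < 2 * m)] at this
      nlinarith
    rw [intervalIntegral.integral_neg] at hneg
    have hadd := intervalIntegral.integral_add_adjacent_intervals
      (intg hm 0 x) (intg hm x (π/2))
    have := F_half hm hroot
    rw [F] at this ⊢
    linarith [hadd]

lemma F_ne {x : ℝ} (hx : x ∈ Set.Ioo 0 π) (hne : x ≠ π / 2) : F m x ≠ 0 := by
  rcases lt_or_gt_of_ne hne with h | h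
  · exact (F_pos hm hroot ⟨hx.1, h⟩).ne'
  · have h2 : π - x ∈ Set.Ioo 0 (π / 2) := ⟨by linarith [hx.2], by linarith⟩
    have := F_pos hm hroot h2
    rw [F_pi_sub hm, F_pi hm hroot] at this
    linarith

omit hroot

lemma hasDeriv_fig (x : ℝ) :
    HasDerivAt (figEight m) (WithLp.toLp 2 ![g m x, 2 * Real.sqrt m * Real.sin x] : R2) x := by
  rw [show figEight m = fun y => (EuclideanSpace.equiv (Fin 2) ℝ).symm
      (![2 * EelInc y m - Fel y m, -2 * Real.sqrt m * Real.cos y]) from rfl]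
  rw [show (WithLp.toLp 2 ![g m x, 2 * Real.sqrt m * Real.sin x] : R2) =
      (EuclideanSpace.equiv (Fin 2) ℝ).symm ![g m x, 2 * Real.sqrt m * Real.sin x] from rfl]
  apply (EuclideanSpace.equiv (Fin 2) ℝ).symm.toContinuousLinearMap.hasFDerivAt.comp_hasDerivAt
  apply hasDerivAt_pi.2
  intro i
  fin_cases i
  · simp only [Matrix.cons_val_zero]
    have h1 : HasDerivAt (fun y => EelInc y m) (Real.sqrt (1 - m * Real.sin x ^ 2)) x :=
      ((cont_sqrt (m := m)).integral_hasStrictDerivAt 0 x).hasDerivAt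
    have h2 : HasDerivAt (fun y => Fel y m) (1 / Real.sqrt (1 - m * Real.sin x ^ 2)) x :=
      ((cont_inv hm).integral_hasStrictDerivAt 0 x).hasDerivAt
    exact (h1.const_mul 2).sub h2
  · simp only [Matrix.cons_val_one, Matrix.head_cons]
    have h0 := (Real.hasDerivAt_cos x).const_mul (-2 * Real.sqrt m)
    have h2 : HasDerivAt (fun y => -2 * Real.sqrt m * Real.cos y)
        (2 * Real.sqrt m * Real.sin x) x := by
      rw [show (2 * Real.sqrt m * Real.sin x) = -2 * Real.sqrt m * -Real.sin x by ring]; exact h0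
    exact h2

end FigEightAux

open FigEightAux in
/-- The figure-eight elastica has exactly one self-intersection point, of multiplicity two,
attained at the parameters `π/2` and `3π/2`, and this self-intersection is non-tangential:
the two tangent vectors there are linearly independent. -/
theorem figEight_selfIntersection (m : ℝ) (hm : m ∈ Set.Ioo (0:ℝ) 1)
    (hroot : 2 * Eel m - Kel m = 0) :
    (∀ x₁ x₂ : ℝ, x₁ ∈ Set.Ico 0 (2 * π) → x₂ ∈ Set.Ico 0 (2 * π) → x₁ < x₂ →
      (figEight m x₁ = figEight m x₂ ↔ x₁ = π / 2 ∧ x₂ = 3 * π / 2)) ∧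
    det2 (deriv (figEight m) (π / 2)) (deriv (figEight m) (3 * π / 2)) ≠ 0 := by
  have hmpos := hm.1
  have hm1 := hm.2
  have hhalf := m_half hm hroot
  have hpi := Real.pi_pos
  have hF2pi : ∀ x : ℝ, F m (2 * π - x) = - F m x := by
    intro x
    rw [show 2 * π - x = (π - x) + π by ring, F_add_pi hm, F_pi_sub hm, F_pi hm hroot]
    ring
  have hfig : ∀ x y : ℝ, figEight m x = figEight m y ↔
      (F m x = F m y ∧ Real.cos x = Real.cos y) := by
    intro x y
    rw [figEight, figEight]
    constructor
    · intro h
      have h0 := congrFun (congrArg WithLp.ofLp h) 0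
      have h1 := congrFun (congrArg WithLp.ofLp h) 1
      simp only [WithLp.ofLp_toLp, Matrix.cons_val_zero, Matrix.cons_val_one, Matrix.head_cons] at h0 h1
      constructor
      · rw [← ff_eq hm, ← ff_eq hm]; exact h0
      · have hs : (-2 : ℝ) * Real.sqrt m ≠ 0 :=
          mul_ne_zero (by norm_num) (Real.sqrt_pos.2 hmpos).ne'
        exact mul_left_cancel₀ hs h1
    · rintro ⟨h0, h1⟩
      have h0' : 2 * EelInc x m - Fel x m = 2 * EelInc y m - Fel y m := by
        rw [ff_eq hm, ff_eq hm]; exact h0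
      rw [h0', h1]
  constructor
  · intro x₁ x₂ hx₁ hx₂ hlt
    constructor
    · intro heq
      rw [hfig] at heq
      obtain ⟨hFeq, hcos⟩ := heq
      have hkey : x₂ = 2 * π - x₁ ∧ 0 < x₁ ∧ x₁ < π := by
        rcases le_or_gt x₂ π with h2 | h2
        · exfalso
          have := Real.injOn_cos ⟨hx₁.1, by linarith⟩ ⟨by linarith [hx₂.1], h2⟩ hcos
          linarith
        · have hcos2 : Real.cos (2 * π - x₂) = Real.cos x₂ := by
            rw [Real.cos_sub]
            simp [Real.cos_two_pi, Real.sin_two_pi]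
          rcases le_or_gt x₁ π with h1 | h1
          · have := Real.injOn_cos ⟨hx₁.1, h1⟩
              ⟨by linarith [hx₂.2], by linarith⟩ (hcos.trans hcos2.symm)
            refine ⟨by linarith, ?_, by linarith⟩
            linarith [hx₂.2]
          · exfalso
            have hcos1 : Real.cos (2 * π - x₁) = Real.cos x₁ := by
              rw [Real.cos_sub]
              simp [Real.cos_two_pi, Real.sin_two_pi]
            have := Real.injOn_cos ⟨by linarith [hx₁.2], by linarith⟩
              ⟨by linarith [hx₂.2], by linarith⟩ (hcos1.trans (hcos.trans hcos2.symm))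
            linarith
      obtain ⟨hx2eq, h1pos, h1lt⟩ := hkey
      have hF0 : F m x₁ = 0 := by
        have : F m x₂ = - F m x₁ := by rw [hx2eq, hF2pi]
        rw [this] at hFeq
        linarith
      have hx1 : x₁ = π / 2 := by
        by_contra hne
        exact F_ne hm hroot ⟨h1pos, h1lt⟩ hne hF0
      exact ⟨hx1, by rw [hx2eq, hx1]; ring⟩
    · rintro ⟨h1, h2⟩
      subst h1; subst h2
      rw [hfig]
      constructor
      · rw [F_half hm hroot, show 3 * π / 2 = π / 2 + π by ring, F_add_pi hm,
          F_half hm hroot, F_pi hm hroot]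
        ring
      · rw [show 3 * π / 2 = π + π / 2 by ring]
        simp [Real.cos_add]
  · have d1 := (hasDeriv_fig hm (π / 2)).deriv
    have d2 := (hasDeriv_fig hm (3 * π / 2)).deriv
    rw [d1, d2]
    have hs1 : Real.sin (π / 2) = 1 := Real.sin_pi_div_two
    have hs2 : Real.sin (3 * π / 2) = -1 := by
      rw [show 3 * π / 2 = π + π / 2 by ring]
      simp [Real.sin_add]
    have hg : g m (3 * π / 2) = g m (π / 2) := by
      rw [g_eq hm, g_eq hm, hs1, hs2]
      norm_num
    simp only [det2, PiLp.toLp_apply, Matrix.cons_val_zero, Matrix.cons_val_one, Matrix.head_cons, hs1, hs2, hg]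
    have hgval : g m (π / 2) = (1 - 2 * m) / Real.sqrt (1 - m) := by
      rw [g_eq hm, hs1]; norm_num
    rw [hgval]
    have h1m : 0 < Real.sqrt (1 - m) := Real.sqrt_pos.2 (by linarith)
    have hsm : 0 < Real.sqrt m := Real.sqrt_pos.2 hmpos
    have hne : (1 - 2 * m) / Real.sqrt (1 - m) < 0 :=
      div_neg_of_neg_of_pos (by linarith) h1m
    nlinarith
end
end

section
/- The map (0,1) ∋ m ↦ 2E(m) − K(m) has a unique zero m* ∈ (0,1), and moreover m* > 1/2. -/
set_option maxHeartbeats 1000000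


open Real MeasureTheory Set Function intervalIntegral

noncomputable section

namespace TwoESubK

/-- `φ(u) = 2√u - 1/√u`. -/
def phi (u : ℝ) : ℝ := 2 * Real.sqrt u - 1 / Real.sqrt u

lemma phi_lt {a b : ℝ} (ha : 0 < a) (hab : a < b) : phi a < phi b := by
  have hsa : 0 < Real.sqrt a := Real.sqrt_pos.2 ha
  have hs : Real.sqrt a < Real.sqrt b := Real.sqrt_lt_sqrt ha.le hab
  have h1 : 1 / Real.sqrt b < 1 / Real.sqrt a := one_div_lt_one_div_of_lt hsa hs
  unfold phi; linarith

lemma phi_le {a b : ℝ} (ha : 0 < a) (hab : a ≤ b) : phi a ≤ phi b := by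
  rcases hab.eq_or_lt with rfl | h
  · exact le_rfl
  · exact (phi_lt ha h).le

lemma phi_le_of_sq {u r : ℝ} (hu : 0 < u) (hr : 0 < r) (h : u ≤ r ^ 2) :
    phi u ≤ 2 * r - 1 / r := by
  have h1 : Real.sqrt u ≤ r := by
    calc Real.sqrt u ≤ Real.sqrt (r ^ 2) := Real.sqrt_le_sqrt h
    _ = r := Real.sqrt_sq hr.le
  have h2 : 0 < Real.sqrt u := Real.sqrt_pos.2 hu
  have h3 : 1 / r ≤ 1 / Real.sqrt u := one_div_le_one_div_of_le h2 h1
  unfold phi; linarith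

lemma phi_pos {u : ℝ} (h : 1/2 < u) : 0 < phi u := by
  have hup : (0:ℝ) < u := by linarith
  have hsu : 0 < Real.sqrt u := Real.sqrt_pos.2 hup
  have : 1 / Real.sqrt u < 2 * Real.sqrt u := by
    rw [div_lt_iff₀ hsu, mul_assoc, Real.mul_self_sqrt hup.le]; linarith
  unfold phi; linarith

lemma u_ge {m : ℝ} (hm0 : 0 ≤ m) (θ : ℝ) : 1 - m ≤ 1 - m * Real.sin θ ^ 2 := by
  nlinarith [Real.sin_sq_le_one θ]

lemma cont_sqrt (m : ℝ) : Continuous fun θ : ℝ => Real.sqrt (1 - m * Real.sin θ ^ 2) :=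
  Real.continuous_sqrt.comp (by continuity)

lemma sqrtu_pos {m : ℝ} (hm0 : 0 ≤ m) (hm1 : m < 1) (θ : ℝ) :
    0 < Real.sqrt (1 - m * Real.sin θ ^ 2) :=
  Real.sqrt_pos.2 (by nlinarith [Real.sin_sq_le_one θ])

lemma cont_inv {m : ℝ} (hm0 : 0 ≤ m) (hm1 : m < 1) :
    Continuous fun θ : ℝ => 1 / Real.sqrt (1 - m * Real.sin θ ^ 2) :=
  continuous_const.div (cont_sqrt m) fun θ => (sqrtu_pos hm0 hm1 θ).ne'

lemma cont_phi {m : ℝ} (hm0 : 0 ≤ m) (hm1 : m < 1) :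
    Continuous fun θ : ℝ => phi (1 - m * Real.sin θ ^ 2) := by
  unfold phi
  exact (continuous_const.mul (cont_sqrt m)).sub (cont_inv hm0 hm1)

lemma f_eq {m : ℝ} (hm0 : 0 ≤ m) (hm1 : m < 1) :
    2 * Eel m - Kel m = ∫ θ in (0:ℝ)..(π/2), phi (1 - m * Real.sin θ ^ 2) := by
  unfold Eel Kel phi
  rw [← intervalIntegral.integral_const_mul,
    ← intervalIntegral.integral_sub (f := fun θ : ℝ => 2 * Real.sqrt (1 - m * Real.sin θ ^ 2))
      ((continuous_const.mul (cont_sqrt m)).intervalIntegrable _ _)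
      ((cont_inv hm0 hm1).intervalIntegrable _ _)]

lemma f_anti {m1 m2 : ℝ} (h0 : 0 ≤ m1) (h12 : m1 < m2) (h1 : m2 < 1) :
    2 * Eel m2 - Kel m2 < 2 * Eel m1 - Kel m1 := by
  have h0' : 0 ≤ m2 := h0.trans h12.le
  have h1' : m1 < 1 := h12.trans h1
  rw [f_eq h0 h1', f_eq h0' h1]
  have key : 0 < ∫ θ in (0:ℝ)..(π/2),
      (phi (1 - m1 * Real.sin θ ^ 2) - phi (1 - m2 * Real.sin θ ^ 2)) := by
    apply intervalIntegral.intervalIntegral_pos_of_pos_on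
    · exact ((cont_phi h0 h1').sub (cont_phi h0' h1)).intervalIntegrable _ _
    · intro θ hθ
      have hπ := pi_pos
      have hs : 0 < Real.sin θ := Real.sin_pos_of_pos_of_lt_pi hθ.1 (by linarith [hθ.2])
      have hs2 : Real.sin θ ^ 2 ≤ 1 := Real.sin_sq_le_one θ
      have hlt : 1 - m2 * Real.sin θ ^ 2 < 1 - m1 * Real.sin θ ^ 2 := by
        nlinarith [mul_pos (sub_pos.2 h12) (pow_pos hs 2)]
      have hpos : 0 < 1 - m2 * Real.sin θ ^ 2 := by
        nlinarith [mul_le_of_le_one_right h0' hs2]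
      linarith [phi_lt hpos hlt]
    · linarith [pi_pos]
  rw [intervalIntegral.integral_sub
      ((cont_phi h0 h1').intervalIntegrable _ _)
      ((cont_phi h0' h1).intervalIntegrable _ _)] at key
  linarith

lemma f_half_pos : 0 < 2 * Eel (1/2) - Kel (1/2) := by
  rw [f_eq (by norm_num) (by norm_num)]
  apply intervalIntegral.intervalIntegral_pos_of_pos_on
    ((cont_phi (by norm_num) (by norm_num)).intervalIntegrable _ _)
  · intro θ hθ
    have hπ := pi_pos
    have hmem : θ ∈ Icc (-(π/2)) (π/2) := ⟨by linarith [hθ.1], (hθ.2).le⟩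
    have hmem' : (π/2) ∈ Icc (-(π/2)) (π/2) := ⟨by linarith, le_rfl⟩
    have hs1 : Real.sin θ < 1 := by
      have := Real.strictMonoOn_sin hmem hmem' hθ.2
      rwa [Real.sin_pi_div_two] at this
    have hs0 : 0 < Real.sin θ := Real.sin_pos_of_pos_of_lt_pi hθ.1 (by linarith [hθ.2])
    exact phi_pos (by nlinarith)
  · linarith [pi_pos]

/-- Continuous global modification of the integrand. -/
def Fc (m θ : ℝ) : ℝ :=
  2 * Real.sqrt (1 - m * Real.sin θ ^ 2)
    - 1 / Real.sqrt (max (1 - m * Real.sin θ ^ 2) (1/100))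

lemma Fc_cont : Continuous (Function.uncurry Fc) := by
  have h1 : Continuous fun p : ℝ × ℝ => 1 - p.1 * Real.sin p.2 ^ 2 :=
    continuous_const.sub
      (continuous_fst.mul ((Real.continuous_sin.comp continuous_snd).pow 2))
  apply Continuous.sub
  · exact continuous_const.mul (Real.continuous_sqrt.comp h1)
  · refine continuous_const.div (Real.continuous_sqrt.comp (h1.max continuous_const)) ?_
    intro p
    refine (Real.sqrt_pos.2 ?_).ne'
    exact lt_max_of_lt_right (by norm_num)

lemma fc_cont : Continuous fun m => ∫ θ in Icc (0:ℝ) (π/2), Fc m θ :=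
  continuous_parametric_integral_of_continuous Fc_cont isCompact_Icc

lemma f_eq_fc {m : ℝ} (hm0 : 0 ≤ m) (hm : m ≤ 99/100) :
    2 * Eel m - Kel m = ∫ θ in Icc (0:ℝ) (π/2), Fc m θ := by
  have hπ := pi_pos
  rw [f_eq hm0 (by linarith), MeasureTheory.integral_Icc_eq_integral_Ioc,
    ← intervalIntegral.integral_of_le (by linarith : (0:ℝ) ≤ π/2)]
  apply intervalIntegral.integral_congr
  intro θ _
  unfold Fc phi
  have h : (1:ℝ)/100 ≤ 1 - m * Real.sin θ ^ 2 := by nlinarith [Real.sin_sq_le_one θ]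
  rw [max_eq_left (by linarith)]

lemma f_contOn : ContinuousOn (fun m => 2 * Eel m - Kel m) (Icc (0:ℝ) (99/100)) := by
  apply ContinuousOn.congr fc_cont.continuousOn
  intro m hm
  exact f_eq_fc hm.1 hm.2

lemma sqrt3_le : Real.sqrt 3 ≤ 1.7321 := by
  rw [show (1.7321:ℝ) = Real.sqrt (1.7321 ^ 2) from (Real.sqrt_sq (by norm_num)).symm]
  exact Real.sqrt_le_sqrt (by norm_num)

lemma sqrt3_ge : (1.732 : ℝ) ≤ Real.sqrt 3 := by
  rw [show (1.732:ℝ) = Real.sqrt (1.732 ^ 2) from (Real.sqrt_sq (by norm_num)).symm]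
  exact Real.sqrt_le_sqrt (by norm_num)

lemma f_neg : 2 * Eel (99/100) - Kel (99/100) < 0 := by
  have hπ := pi_pos
  rw [f_eq (by norm_num) (by norm_num)]
  set g : ℝ → ℝ := fun θ => phi (1 - (99/100) * Real.sin θ ^ 2) with hg
  have hgc : Continuous g := cont_phi (by norm_num) (by norm_num)
  have hii : ∀ a b : ℝ, IntervalIntegrable g volume a b := fun a b =>
    hgc.intervalIntegrable a b
  -- segment bound
  have seg : ∀ a b r : ℝ, 0 ≤ a → a ≤ b → b ≤ π/2 → 0 < r →
      1 - (99/100) * Real.sin a ^ 2 ≤ r ^ 2 →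
      (∫ θ in a..b, g θ) ≤ (b - a) * (2 * r - 1 / r) := by
    intro a b r ha hab hb hr hur
    have hbound : ∀ θ ∈ Icc a b, g θ ≤ 2 * r - 1 / r := by
      intro θ hθ
      have hmem1 : a ∈ Icc (-(π/2)) (π/2) := ⟨by linarith, by linarith⟩
      have hmem2 : θ ∈ Icc (-(π/2)) (π/2) := ⟨by linarith [hθ.1], by linarith [hθ.2]⟩
      have hsin : Real.sin a ≤ Real.sin θ :=
        Real.strictMonoOn_sin.monotoneOn hmem1 hmem2 hθ.1
      have hsa : 0 ≤ Real.sin a := Real.sin_nonneg_of_nonneg_of_le_pi ha (by linarith)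
      have h2 : Real.sin a ^ 2 ≤ Real.sin θ ^ 2 := by nlinarith
      have hu : 0 < 1 - (99/100) * Real.sin θ ^ 2 := by nlinarith [Real.sin_sq_le_one θ]
      calc g θ ≤ phi (1 - (99/100) * Real.sin a ^ 2) := phi_le hu (by nlinarith)
        _ ≤ 2 * r - 1 / r := phi_le_of_sq (by nlinarith) hr hur
    calc (∫ θ in a..b, g θ) ≤ ∫ _ in a..b, (2 * r - 1 / r) :=
          intervalIntegral.integral_mono_on hab (hii a b) intervalIntegrable_const hbound
      _ = (b - a) * (2 * r - 1 / r) := by rw [intervalIntegral.integral_const, smul_eq_mul]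
  -- sin² values at the partition nodes
  have s0 : Real.sin 0 ^ 2 = 0 := by rw [Real.sin_zero]; ring
  have s1 : Real.sin (π/12) ^ 2 = (2 - Real.sqrt 3) / 4 := by
    rw [Real.sin_sq_eq_half_sub, show 2 * (π/12) = π/6 by ring, Real.cos_pi_div_six]; ring
  have s2 : Real.sin (π/6) ^ 2 = 1/4 := by
    rw [Real.sin_sq_eq_half_sub, show 2 * (π/6) = π/3 by ring, Real.cos_pi_div_three]; ring
  have s3 : Real.sin (π/4) ^ 2 = 1/2 := by
    rw [Real.sin_sq_eq_half_sub, show 2 * (π/4) = π/2 by ring, Real.cos_pi_div_two]; ring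
  have s4 : Real.sin (π/3) ^ 2 = 3/4 := by
    rw [Real.sin_sq_eq_half_sub, show 2 * (π/3) = π - π/3 by ring, Real.cos_pi_sub,
      Real.cos_pi_div_three]; ring
  have s5 : Real.sin (5*π/12) ^ 2 = (2 + Real.sqrt 3) / 4 := by
    rw [Real.sin_sq_eq_half_sub, show 2 * (5*π/12) = π - π/6 by ring, Real.cos_pi_sub,
      Real.cos_pi_div_six]; ring
  have h3le := sqrt3_le
  have h3ge := sqrt3_ge
  -- the six segment bounds
  have b0 : (∫ θ in (0:ℝ)..(π/12), g θ) ≤ (π/12 - 0) * (2 * 1 - 1 / 1) := by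
    apply seg 0 (π/12) 1 le_rfl (by linarith) (by linarith) (by norm_num)
    rw [s0]; norm_num
  have b1 : (∫ θ in (π/12)..(π/6), g θ) ≤ (π/6 - π/12) * (2 * (967/1000) - 1 / (967/1000)) := by
    apply seg (π/12) (π/6) (967/1000) (by linarith) (by linarith) (by linarith) (by norm_num)
    rw [s1]; nlinarith
  have b2 : (∫ θ in (π/6)..(π/4), g θ) ≤ (π/4 - π/6) * (2 * (868/1000) - 1 / (868/1000)) := by
    apply seg (π/6) (π/4) (868/1000) (by linarith) (by linarith) (by linarith) (by norm_num)
    rw [s2]; norm_num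
  have b3 : (∫ θ in (π/4)..(π/3), g θ) ≤ (π/3 - π/4) * (2 * (711/1000) - 1 / (711/1000)) := by
    apply seg (π/4) (π/3) (711/1000) (by linarith) (by linarith) (by linarith) (by norm_num)
    rw [s3]; norm_num
  have b4 : (∫ θ in (π/3)..(5*π/12), g θ) ≤
      (5*π/12 - π/3) * (2 * (5075/10000) - 1 / (5075/10000)) := by
    apply seg (π/3) (5*π/12) (5075/10000) (by linarith) (by linarith) (by linarith) (by norm_num)
    rw [s4]; norm_num
  have b5 : (∫ θ in (5*π/12)..(π/2), g θ) ≤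
      (π/2 - 5*π/12) * (2 * (2763/10000) - 1 / (2763/10000)) := by
    apply seg (5*π/12) (π/2) (2763/10000) (by linarith) (by linarith) (by linarith) (by norm_num)
    rw [s5]; nlinarith
  -- split the integral
  have key : (∫ θ in (0:ℝ)..(π/2), g θ) =
      (∫ θ in (0:ℝ)..(π/12), g θ) + (∫ θ in (π/12)..(π/6), g θ) + (∫ θ in (π/6)..(π/4), g θ)
      + (∫ θ in (π/4)..(π/3), g θ) + (∫ θ in (π/3)..(5*π/12), g θ)
      + (∫ θ in (5*π/12)..(π/2), g θ) := by
    rw [integral_add_adjacent_intervals (hii 0 (π/12)) (hii (π/12) (π/6)),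
      integral_add_adjacent_intervals (hii 0 (π/6)) (hii (π/6) (π/4)),
      integral_add_adjacent_intervals (hii 0 (π/4)) (hii (π/4) (π/3)),
      integral_add_adjacent_intervals (hii 0 (π/3)) (hii (π/3) (5*π/12)),
      integral_add_adjacent_intervals (hii 0 (5*π/12)) (hii (5*π/12) (π/2))]
  rw [key]
  nlinarith [b0, b1, b2, b3, b4, b5, pi_pos]

end TwoESubK

/-- The map `m ↦ 2E(m) - K(m)` has a unique zero `m*` in `(0,1)`, and `m* > 1/2`. -/
theorem unique_root_two_E_sub_K :
    ∃ m : ℝ, m ∈ Set.Ioo (0:ℝ) 1 ∧ 2 * Eel m - Kel m = 0 ∧ 1 / 2 < m ∧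
      ∀ m' ∈ Set.Ioo (0:ℝ) 1, 2 * Eel m' - Kel m' = 0 → m' = m := by
  have hcont : ContinuousOn (fun m => 2 * Eel m - Kel m) (Icc (1/2 : ℝ) (99/100)) :=
    TwoESubK.f_contOn.mono (Icc_subset_Icc (by norm_num) le_rfl)
  have h0 : (0:ℝ) ∈ Ioo ((fun m => 2 * Eel m - Kel m) (99/100))
      ((fun m => 2 * Eel m - Kel m) (1/2)) := ⟨TwoESubK.f_neg, TwoESubK.f_half_pos⟩
  obtain ⟨m, hm, hfm⟩ := intermediate_value_Ioo' (by norm_num : (1/2:ℝ) ≤ 99/100) hcont h0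
  simp only at hfm
  refine ⟨m, ⟨by linarith [hm.1], by linarith [hm.2]⟩, hfm, hm.1, ?_⟩
  intro m' hm' hfm'
  by_contra hne
  rcases lt_or_gt_of_ne hne with h | h
  · have := TwoESubK.f_anti hm'.1.le h (by linarith [hm.2] : m < 1)
    rw [hfm, hfm'] at this
    exact lt_irrefl 0 this
  · have := TwoESubK.f_anti (by linarith [hm.1] : (0:ℝ) ≤ m) h hm'.2
    rw [hfm, hfm'] at this
    exact lt_irrefl 0 this
end
end

section
/- Let m* ∈ (0,1) be the unique root of m ↦ 2E(m) − K(m). Then the function [0,2π) ∋ x ↦ 2E(x,m*) − F(x,m*) has exactly four zeroes in [0,2π), namely x = 0, π/2, π, and 3π/2. -/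
open Real MeasureTheory Set Function intervalIntegral

noncomputable section

namespace FZ

/-- The integrand of `x ↦ 2E(x,m) - F(x,m)`. -/
def fm (m θ : ℝ) : ℝ :=
  2 * Real.sqrt (1 - m * Real.sin θ ^ 2) - 1 / Real.sqrt (1 - m * Real.sin θ ^ 2)

/-- `gm m x = 2E(x,m) - F(x,m)`. -/
def gm (m x : ℝ) : ℝ := ∫ θ in (0:ℝ)..x, fm m θ

lemma hposit {m : ℝ} (hm1 : m < 1) (hm0 : 0 < m) (θ : ℝ) :
    0 < 1 - m * Real.sin θ ^ 2 := by
  nlinarith [Real.sin_sq_le_one θ, sq_nonneg (Real.sin θ)]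

lemma contf {m : ℝ} (hm0 : 0 < m) (hm1 : m < 1) : Continuous (fm m) := by
  have h1 : ∀ θ, Real.sqrt (1 - m * Real.sin θ ^ 2) ≠ 0 := fun θ =>
    ne_of_gt (Real.sqrt_pos.2 (hposit hm1 hm0 θ))
  have hc : Continuous fun θ : ℝ => Real.sqrt (1 - m * Real.sin θ ^ 2) :=
    ((continuous_const.sub (continuous_const.mul (Real.continuous_sin.pow 2))).sqrt)
  exact (continuous_const.mul hc).sub (continuous_const.div hc h1)

lemma fm_per (m : ℝ) : Function.Periodic (fm m) π := by
  intro θ; simp [fm, Real.sin_add_pi, neg_sq]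

lemma fm_sym (m θ : ℝ) : fm m (π - θ) = fm m θ := by
  simp [fm, Real.sin_pi_sub]

lemma fm_pos {m θ : ℝ} (h : m * Real.sin θ ^ 2 < 1/2) : 0 < fm m θ := by
  set t := 1 - m * Real.sin θ ^ 2 with ht
  have ht2 : (1:ℝ)/2 < t := by simp [ht]; linarith
  have hst : 0 < Real.sqrt t := Real.sqrt_pos.2 (by linarith)
  have hsq : Real.sqrt t ^ 2 = t := Real.sq_sqrt (by linarith)
  rw [fm, ← ht, sub_pos, div_lt_iff₀ hst]
  nlinarith

lemma fm_neg {m θ : ℝ} (h0 : 0 < 1 - m * Real.sin θ ^ 2)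
    (h : 1/2 < m * Real.sin θ ^ 2) : fm m θ < 0 := by
  set t := 1 - m * Real.sin θ ^ 2 with ht
  have ht2 : t < 1/2 := by simp [ht]; linarith
  have hst : 0 < Real.sqrt t := Real.sqrt_pos.2 h0
  have hsq : Real.sqrt t ^ 2 = t := Real.sq_sqrt h0.le
  rw [fm, ← ht, sub_neg, lt_div_iff₀ hst]
  nlinarith

lemma intf {m : ℝ} (hm0 : 0 < m) (hm1 : m < 1) (a b : ℝ) :
    IntervalIntegrable (fm m) volume a b :=
  (contf hm0 hm1).intervalIntegrable a b

lemma key {m : ℝ} (hm0 : 0 < m) (hm1 : m < 1) (x : ℝ) :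
    2 * EelInc x m - Fel x m = gm m x := by
  have h1 : ∀ θ, Real.sqrt (1 - m * Real.sin θ ^ 2) ≠ 0 := fun θ =>
    ne_of_gt (Real.sqrt_pos.2 (hposit hm1 hm0 θ))
  have hc : Continuous fun θ : ℝ => Real.sqrt (1 - m * Real.sin θ ^ 2) :=
    ((continuous_const.sub (continuous_const.mul (Real.continuous_sin.pow 2))).sqrt)
  have hc2 : Continuous fun θ : ℝ => 1 / Real.sqrt (1 - m * Real.sin θ ^ 2) :=
    continuous_const.div hc h1
  unfold EelInc Fel gm fm
  rw [← intervalIntegral.integral_const_mul,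
    ← intervalIntegral.integral_sub (Continuous.intervalIntegrable
      (u := fun θ : ℝ => 2 * Real.sqrt (1 - m * Real.sin θ ^ 2)) (continuous_const.mul hc) 0 x)
      (hc2.intervalIntegrable 0 x)]

lemma gsym {m : ℝ} (hm0 : 0 < m) (hm1 : m < 1) (x : ℝ) :
    gm m (π - x) = gm m π - gm m x := by
  have h : gm m π - gm m x = ∫ θ in x..π, fm m θ :=
    intervalIntegral.integral_interval_sub_left (intf hm0 hm1 0 π) (intf hm0 hm1 0 x)
  have h2 : (∫ u in (0:ℝ)..(π - x), fm m (π - u)) = ∫ θ in x..π, fm m θ := by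
    rw [intervalIntegral.integral_comp_sub_left]; norm_num
  rw [h, ← h2]
  simp only [fm_sym]
  rfl

lemma gper {m : ℝ} (hm0 : 0 < m) (hm1 : m < 1) (x : ℝ) :
    gm m (x + π) = gm m x + gm m π := by
  have h : gm m (x + π) - gm m x = ∫ θ in x..(x + π), fm m θ :=
    intervalIntegral.integral_interval_sub_left (intf hm0 hm1 0 (x+π)) (intf hm0 hm1 0 x)
  have h2 : (∫ θ in x..(x + π), fm m θ) = ∫ θ in (0:ℝ)..(0 + π), fm m θ :=
    (fm_per m).intervalIntegral_add_eq x 0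
  rw [h2] at h
  have h3 : gm m π = ∫ θ in (0:ℝ)..(0 + π), fm m θ := by norm_num; rfl
  linarith

/-- `m > 1/2` at a root of `2E - K`. -/
lemma half_lt {m : ℝ} (hm0 : 0 < m) (hm1 : m < 1) (ghalf : gm m (π/2) = 0) :
    1/2 < m := by
  by_contra hle
  push_neg at hle
  have hpos : 0 < gm m (π/2) := by
    apply intervalIntegral.intervalIntegral_pos_of_pos_on (intf hm0 hm1 0 (π/2))
    · intro θ hθ
      apply fm_pos
      have hs0 : 0 < Real.sin θ := Real.sin_pos_of_pos_of_lt_pi hθ.1 (by linarith [hθ.2, pi_pos])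
      have hs1 : Real.sin θ < 1 := by
        have := Real.strictMonoOn_sin (by constructor <;> [linarith [hθ.1, pi_pos]; linarith [hθ.2]] :
          θ ∈ Set.Icc (-(π/2)) (π/2)) (by constructor <;> linarith [pi_pos] :
          (π/2) ∈ Set.Icc (-(π/2)) (π/2)) hθ.2
        simpa using this
      nlinarith
    · linarith [pi_pos]
  linarith

/-- Positivity of `gm` on `(0, π/2)`. -/
lemma gpos {m : ℝ} (hm0 : 0 < m) (hm1 : m < 1) (ghalf : gm m (π/2) = 0)
    {x : ℝ} (hx : x ∈ Set.Ioo 0 (π/2)) : 0 < gm m x := by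
  have hm2 : 1/2 < m := half_lt hm0 hm1 ghalf
  set s : ℝ := Real.sqrt (1/(2*m)) with hs
  have hval : 0 < 1/(2*m) := by positivity
  have hval1 : 1/(2*m) < 1 := by rw [div_lt_one (by linarith)]; linarith
  have hs0 : 0 < s := Real.sqrt_pos.2 hval
  have hs1 : s < 1 := by
    have := Real.sqrt_lt_sqrt hval.le hval1
    simpa [hs] using this
  set θ₀ : ℝ := Real.arcsin s with hθ₀def
  have hsinθ₀ : Real.sin θ₀ = s := Real.sin_arcsin (by linarith) (by linarith)
  have hθ₀0 : 0 < θ₀ := Real.arcsin_pos.2 hs0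
  have hθ₀half : θ₀ < π/2 := Real.arcsin_lt_pi_div_two.2 hs1
  have hsq : Real.sin θ₀ ^ 2 = 1/(2*m) := by
    rw [hsinθ₀, hs, Real.sq_sqrt hval.le]
  -- monotonicity helper
  have mono : ∀ a b : ℝ, 0 ≤ a → a < b → b ≤ π/2 → Real.sin a < Real.sin b := by
    intro a b ha hab hb
    exact Real.strictMonoOn_sin
      (⟨by linarith [pi_pos], by linarith⟩) (⟨by linarith [pi_pos], hb⟩) hab
  rcases le_or_gt x θ₀ with hle | hlt
  · -- fm > 0 on (0, x)
    apply intervalIntegral.intervalIntegral_pos_of_pos_on (intf hm0 hm1 0 x)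
    · intro θ hθ
      apply fm_pos
      have h1 : Real.sin θ < Real.sin θ₀ := mono θ θ₀ hθ.1.le (by linarith [hθ.2]) hθ₀half.le
      have h2 : 0 ≤ Real.sin θ := Real.sin_nonneg_of_nonneg_of_le_pi hθ.1.le
        (by linarith [hθ.2, hx.2, pi_pos])
      have h3 : Real.sin θ ^ 2 < 1/(2*m) := by rw [← hsq]; nlinarith
      calc m * Real.sin θ ^ 2 < m * (1/(2*m)) := by
            exact mul_lt_mul_of_pos_left h3 hm0
        _ = 1/2 := by field_simp
    · exact hx.1
  · -- gm x = gm (π/2) + ∫_x^{π/2} (-fm) with -fm > 0 on (x, π/2)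
    have hneg : 0 < ∫ θ in x..(π/2), -fm m θ := by
      apply intervalIntegral.intervalIntegral_pos_of_pos_on (intf hm0 hm1 x (π/2)).neg
      · intro θ hθ
        simp only [Pi.neg_apply, neg_pos]
        apply fm_neg (hposit hm1 hm0 θ)
        have h1 : Real.sin θ₀ < Real.sin θ := mono θ₀ θ hθ₀0.le (by linarith [hθ.1]) hθ.2.le
        have h2 : 0 ≤ Real.sin θ₀ := by rw [hsinθ₀]; linarith
        have h3 : 1/(2*m) < Real.sin θ ^ 2 := by rw [← hsq]; nlinarith
        calc (1:ℝ)/2 = m * (1/(2*m)) := by field_simp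
          _ < m * Real.sin θ ^ 2 := mul_lt_mul_of_pos_left h3 hm0
      · exact hx.2
    have hsub : gm m (π/2) - gm m x = ∫ θ in x..(π/2), fm m θ :=
      intervalIntegral.integral_interval_sub_left (intf hm0 hm1 0 (π/2)) (intf hm0 hm1 0 x)
    rw [intervalIntegral.integral_neg] at hneg
    linarith

end FZ

open FZ

/-- If `m*` is the unique root of `m ↦ 2E(m) - K(m)` in `(0,1)`, then the function
`x ↦ 2E(x,m*) - F(x,m*)` has exactly four zeroes in `[0,2π)`, namely `0, π/2, π, 3π/2`. -/
theorem four_zeroes (m : ℝ) (hm : m ∈ Set.Ioo (0:ℝ) 1)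
    (hroot : 2 * Eel m - Kel m = 0) :
    {x : ℝ | x ∈ Set.Ico 0 (2 * π) ∧ 2 * EelInc x m - Fel x m = 0} =
      {0, π / 2, π, 3 * π / 2} := by
  obtain ⟨hm0, hm1⟩ := hm
  have ghalf : gm m (π/2) = 0 := by rw [← key hm0 hm1 (π/2)]; exact hroot
  have gpi : gm m π = 0 := by
    have := gsym hm0 hm1 (π/2)
    rw [show π - π/2 = π/2 by ring] at this
    linarith
  -- zeroes in [0, π) are exactly 0 and π/2
  have claim : ∀ y : ℝ, 0 ≤ y → y < π → gm m y = 0 → y = 0 ∨ y = π/2 := by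
    intro y hy0 hyπ hgy
    rcases lt_trichotomy y (π/2) with h | h | h
    · rcases eq_or_lt_of_le hy0 with h0 | h0
      · exact Or.inl h0.symm
      · exact absurd hgy (ne_of_gt (gpos hm0 hm1 ghalf ⟨h0, h⟩))
    · exact Or.inr h
    · exfalso
      have h1 : gm m (π - y) = gm m π - gm m y := gsym hm0 hm1 y
      have h2 : 0 < gm m (π - y) :=
        gpos hm0 hm1 ghalf ⟨by linarith, by linarith⟩
      rw [h1, gpi, hgy] at h2
      linarith
  ext x
  simp only [Set.mem_setOf_eq, Set.mem_Ico, Set.mem_insert_iff, Set.mem_singleton_iff,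
    key hm0 hm1]
  constructor
  · rintro ⟨⟨hx0, hx2⟩, hgx⟩
    rcases lt_or_ge x π with hxπ | hxπ
    · rcases claim x hx0 hxπ hgx with h | h
      · exact Or.inl h
      · exact Or.inr (Or.inl h)
    · have hy : gm m (x - π) = 0 := by
        have := gper hm0 hm1 (x - π)
        rw [show x - π + π = x by ring, gpi] at this
        linarith
      rcases claim (x - π) (by linarith) (by linarith) hy with h | h
      · right; right; left; linarith
      · right; right; right; linarith
  · have hπ := pi_pos
    rintro (rfl | rfl | rfl | rfl)
    · refine ⟨⟨le_refl _, by linarith⟩, ?_⟩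
      simp [gm, intervalIntegral.integral_same]
    · exact ⟨⟨by linarith, by linarith⟩, ghalf⟩
    · exact ⟨⟨by linarith, by linarith⟩, gpi⟩
    · refine ⟨⟨by linarith, by linarith⟩, ?_⟩
      have := gper hm0 hm1 (π/2)
      rw [show π/2 + π = 3 * π / 2 by ring] at this
      rw [this, ghalf, gpi]
      ring

end
end
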